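/- Let K be a field of characteristic zero and g a K-algebra with multiplication [ , ]. Then g satisfies the Leibniz identity [[a,b],c] = [a,[b,c]] − [b,[a,c]] for all a,b,c ∈ g if and only if the space of g-valued distributions satisfies the conformal Jacobi identity: for all distributions a, b, c : ℤ → g, all t, s ∈ ℕ, and all u ∈ ℤ, (a_t(b_s c))_u − (b_s(a_t c))_u = Σ_{i=0}^{t} (t choose i) ((a_i b)_{t+s−i} c)_u, where x_i y denotes the i-th product of distributions. -/

import Mathlib

/-!
Let `z` act on distributions by `(z a)_t = a_{t+1}`. The identity
`(z - w)^{i+1} = z (z - w)^i - w (z - w)^i` becomes `a_{i+1} b = (z a)_i b - z (a_i b)`, and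
`a_i (z b) = z (a_i b)`. Feeding these into both sides shows that the defect `J_{t,s}(a, b, c)` of
the conformal Jacobi identity satisfies, for an arbitrary bracket,
`J_{t,s+1}(a, b, c) = J_{t,s}(a, z b, c) - z J_{t,s}(a, b, c)` and
`J_{t+1,s}(a, b, c) = J_{t,s}(z a, b, c) - z J_{t,s}(a, b, c)`
(the second via Pascal's rule on the binomial weights). So the identity holds for all `t, s` as
soon as it holds for `t = s = 0`, where its `u`-th coefficient is the Leibniz identity for
`a_0, b_0, c_u`.
-/

section

variable {K : Type*} [Field K] {g : Type*} [AddCommGroup g] [Module K g]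

/-- The `i`-th product of distributions with values in the algebra `(g, br)`:
`(a_i b)_u = Σ_{k=0}^{i} (−1)^k (i choose k) [a_{i−k}, b_{u+k}]`. -/
def distProd (br : g →ₗ[K] g →ₗ[K] g) (a b : ℤ → g) (i : ℕ) : ℤ → g :=
  fun u => ∑ k ∈ Finset.range (i + 1),
    ((-1 : ℤ) ^ k * (i.choose k : ℤ)) • br (a ((i : ℤ) - (k : ℤ))) (b (u + (k : ℤ)))

end

open Finset

theorem Finset.sum_range_succ_choose_zsmul {M : Type*} [AddCommGroup M] (f : ℕ → M) (n : ℕ) :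
    ∑ i ∈ range (n + 2), ((n + 1).choose i : ℤ) • f i =
      ∑ i ∈ range (n + 1), (n.choose i : ℤ) • f i +
        ∑ i ∈ range (n + 1), (n.choose i : ℤ) • f (i + 1) := by
  simpa only [natCast_zsmul] using sum_choose_succ_nsmul (fun i _ => f i) n

section

variable {g : Type*}

/-- Multiplication of a distribution by `z`: `(z a)_t = a_{t+1}`. -/
def distShift (a : ℤ → g) : ℤ → g := fun u => a (u + 1)

@[simp]
theorem distShift_apply (a : ℤ → g) (u : ℤ) : distShift a u = a (u + 1) := rfl

variable [AddCommGroup g]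

theorem distShift_zero : distShift (0 : ℤ → g) = 0 := rfl

theorem distShift_sub (a b : ℤ → g) : distShift (a - b) = distShift a - distShift b := rfl

theorem distShift_sum_zsmul {ι : Type*} (S : Finset ι) (n : ι → ℤ) (a : ι → ℤ → g) :
    distShift (∑ i ∈ S, n i • a i) = ∑ i ∈ S, n i • distShift (a i) := by
  funext u
  simp [Finset.sum_apply]

variable {K : Type*} [Field K] [Module K g] (br : g →ₗ[K] g →ₗ[K] g)

theorem distProd_sub_right (a b b' : ℤ → g) (i : ℕ) :
    distProd br a (b - b') i = distProd br a b i - distProd br a b' i := by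
  funext u
  simp [distProd, smul_sub, sum_sub_distrib]

theorem distProd_sub_left (a a' b : ℤ → g) (i : ℕ) :
    distProd br (a - a') b i = distProd br a b i - distProd br a' b i := by
  funext u
  simp [distProd, smul_sub, sum_sub_distrib]

theorem distProd_distShift_right (a b : ℤ → g) (i : ℕ) :
    distProd br a (distShift b) i = distShift (distProd br a b i) := by
  funext u
  simp [distProd, add_right_comm]

theorem distProd_succ (a b : ℤ → g) (i : ℕ) :
    distProd br a b (i + 1) = distProd br (distShift a) b i - distShift (distProd br a b i) := by
  funext u
  simp only [distProd, Pi.sub_apply, distShift_apply, mul_comm ((-1 : ℤ) ^ _), mul_smul]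
  rw [sum_range_succ_choose_zsmul
    (fun k => (-1 : ℤ) ^ k • br (a ((i + 1 : ℕ) - (k : ℤ))) (b (u + k))), sub_eq_add_neg,
    ← sum_neg_distrib]
  congr 1
  · refine sum_congr rfl fun k _ => ?_
    rw [show ((i + 1 : ℕ) : ℤ) - k = i - k + 1 by push_cast; ring]
  · refine sum_congr rfl fun k _ => ?_
    rw [show ((i + 1 : ℕ) : ℤ) - (k + 1 : ℕ) = i - k by push_cast; ring,
      show u + ((k + 1 : ℕ) : ℤ) = u + 1 + k by push_cast; ring]
    module

def conformalJacobiator (a b c : ℤ → g) (t s : ℕ) : ℤ → g :=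
  distProd br a (distProd br b c s) t - distProd br b (distProd br a c t) s -
    ∑ i ∈ range (t + 1), (t.choose i : ℤ) • distProd br (distProd br a b i) c (t + s - i)

theorem conformalJacobiator_succ_right (a b c : ℤ → g) (t s : ℕ) :
    conformalJacobiator br a b c t (s + 1) =
      conformalJacobiator br a (distShift b) c t s -
        distShift (conformalJacobiator br a b c t s) := by
  have hsum : ∀ i ∈ range (t + 1),
      (t.choose i : ℤ) • distProd br (distProd br a b i) c (t + (s + 1) - i) =
        (t.choose i : ℤ) • distProd br (distProd br a (distShift b) i) c (t + s - i) -
          (t.choose i : ℤ) • distShift (distProd br (distProd br a b i) c (t + s - i)) := by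
    intro i hi
    rw [show t + (s + 1) - i = t + s - i + 1 by grind, distProd_succ, distProd_distShift_right,
      smul_sub]
  simp only [conformalJacobiator, sum_congr rfl hsum, sum_sub_distrib, distProd_succ,
    distProd_sub_right, distProd_distShift_right, distShift_sub, distShift_sum_zsmul]
  abel

theorem conformalJacobiator_succ_left (a b c : ℤ → g) (t s : ℕ) :
    conformalJacobiator br a b c (t + 1) s =
      conformalJacobiator br (distShift a) b c t s -
        distShift (conformalJacobiator br a b c t s) := by
  have hsum : ∀ i ∈ range (t + 1),
      (t.choose i : ℤ) • distProd br (distProd br (distShift a) b i) c (t + s - i) =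
        (t.choose i : ℤ) • distProd br (distProd br a b (i + 1)) c (t + 1 + s - (i + 1)) +
          (t.choose i : ℤ) • distProd br (distProd br a b i) c (t + 1 + s - i) +
          (t.choose i : ℤ) • distShift (distProd br (distProd br a b i) c (t + s - i)) := by
    intro i hi
    rw [show t + 1 + s - i = t + s - i + 1 by grind, show t + 1 + s - (i + 1) = t + s - i by omega]
    simp only [distProd_succ, distProd_sub_left]
    module
  simp only [conformalJacobiator, sum_congr rfl hsum, sum_add_distrib,
    sum_range_succ_choose_zsmul (fun i => distProd br (distProd br a b i) c (t + 1 + s - i)),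
    distProd_succ, distProd_sub_right, distProd_distShift_right, distShift_sub, distShift_sum_zsmul]
  abel

theorem conformalJacobiator_apply (a b c : ℤ → g) (t s : ℕ) (u : ℤ) :
    conformalJacobiator br a b c t s u =
      distProd br a (distProd br b c s) t u - distProd br b (distProd br a c t) s u -
        ∑ i ∈ range (t + 1),
          (t.choose i : ℤ) • distProd br (distProd br a b i) c (t + s - i) u := by
  simp [conformalJacobiator, Finset.sum_apply]

theorem conformalJacobiator_zero_zero_apply (a b c : ℤ → g) (u : ℤ) :
    conformalJacobiator br a b c 0 0 u =
      br (a 0) (br (b 0) (c u)) - br (b 0) (br (a 0) (c u)) - br (br (a 0) (b 0)) (c u) := by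
  simp [conformalJacobiator_apply, distProd]

theorem conformalJacobiator_eq_zero (h : ∀ a b c, conformalJacobiator br a b c 0 0 = 0)
    (a b c : ℤ → g) (t s : ℕ) : conformalJacobiator br a b c t s = 0 := by
  induction t generalizing a with
  | zero =>
    induction s generalizing b with
    | zero => exact h a b c
    | succ s ih => rw [conformalJacobiator_succ_right, ih, ih, distShift_zero, sub_zero]
  | succ t ih => rw [conformalJacobiator_succ_left, ih, ih, distShift_zero, sub_zero]

end

theorem leibniz_iff_conformal_jacobi_general
    (K : Type*) [Field K]
    (g : Type*) [AddCommGroup g] [Module K g]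
    (br : g →ₗ[K] g →ₗ[K] g) :
    (∀ x y z : g, br (br x y) z = br x (br y z) - br y (br x z)) ↔
    (∀ (a b c : ℤ → g) (t s : ℕ) (u : ℤ),
      distProd br a (distProd br b c s) t u - distProd br b (distProd br a c t) s u =
        ∑ i ∈ Finset.range (t + 1),
          (t.choose i : ℤ) • distProd br (distProd br a b i) c (t + s - i) u) := by
  constructor
  · intro hLeibniz a b c t s u
    have hBase (a b c : ℤ → g) : conformalJacobiator br a b c 0 0 = 0 := by
      funext u
      rw [conformalJacobiator_zero_zero_apply, hLeibniz, sub_self, Pi.zero_apply]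
    rw [← sub_eq_zero, ← conformalJacobiator_apply, conformalJacobiator_eq_zero br hBase,
      Pi.zero_apply]
  · intro hJacobi x y z
    have h := conformalJacobiator_zero_zero_apply br (fun _ => x) (fun _ => y) (fun _ => z) 0
    rw [conformalJacobiator_apply, hJacobi, sub_self, eq_comm, sub_eq_zero] at h
    exact h.symm

/-- An algebra `(g, [ , ])` satisfies the Leibniz identity iff the `g`-valued
distributions satisfy the conformal Jacobi identity (in coefficient form):
`(a_t(b_s c))_u − (b_s(a_t c))_u = Σ_{i=0}^{t} (t choose i) ((a_i b)_{t+s−i} c)_u`. -/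
theorem leibniz_iff_conformal_jacobi
    (K : Type*) [Field K] [CharZero K]
    (g : Type*) [AddCommGroup g] [Module K g]
    (br : g →ₗ[K] g →ₗ[K] g) :
    (∀ x y z : g, br (br x y) z = br x (br y z) - br y (br x z)) ↔
    (∀ (a b c : ℤ → g) (t s : ℕ) (u : ℤ),
      distProd br a (distProd br b c s) t u - distProd br b (distProd br a c t) s u =
        ∑ i ∈ Finset.range (t + 1),
          (t.choose i : ℤ) • distProd br (distProd br a b i) c (t + s - i) u) :=
  leibniz_iff_conformal_jacobi_general K g br
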